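/- arXiv:1805.00274 — 4 statements merged into one kernel-verified Lean document; each statement's English description precedes it below -/
import Mathlib

section
/- Let 𝒜 be an abelian category with enough projectives and let A be an object with Ext¹_𝒜(A, Q) = 0 for every projective object Q. Let 0 → K →^i P →^p A → 0 and 0 → K' →^{i'} P' →^{p'} A' → 0 be short exact sequences with P and P' projective, and suppose morphisms f : K → K', h : P → P', g : A → A' satisfy h ∘ i = i' ∘ f and g ∘ p = p' ∘ h. If f factors through a projective object of 𝒜, then g factors through a projective object of 𝒜. -/
open CategoryTheory Category Limits

universe w v u

variable {𝒜 : Type u} [Category.{v} 𝒜] [Abelian 𝒜]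

/-- A morphism factors through a projective object. -/
def FactorsThroughProjective {X Y : 𝒜} (f : X ⟶ Y) : Prop :=
  ∃ (Q : 𝒜) (_ : Projective Q) (u : X ⟶ Q) (v : Q ⟶ Y), f = u ≫ v

/- `Hom(X₂, Y) → Hom(X₁, Y) → Ext¹(X₃, Y)` is exact, and the last group vanishes. -/
lemma CategoryTheory.ShortComplex.ShortExact.exists_f_comp_eq_of_subsingleton_ext
    [HasExt.{w} 𝒜] {S : ShortComplex 𝒜} (hS : S.ShortExact) {Y : 𝒜}
    [Subsingleton (Abelian.Ext S.X₃ Y 1)] (u : S.X₁ ⟶ Y) :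
    ∃ u' : S.X₂ ⟶ Y, S.f ≫ u' = u := by
  obtain ⟨x, hx⟩ := Abelian.Ext.contravariant_sequence_exact₁ hS Y (Abelian.Ext.mk₀ u)
    (zero_add 1) (Subsingleton.elim _ _)
  refine ⟨Abelian.Ext.homEquiv₀ x, (Abelian.Ext.mk₀_bijective _ _).injective ?_⟩
  rw [← Abelian.Ext.mk₀_comp_mk₀, Abelian.Ext.mk₀_homEquiv₀_apply, hx]

theorem factorsThroughProjective_of_ext_one_vanishing_general
    [HasExt.{w} 𝒜]
    {A K P A' K' P' : 𝒜}
    (hExt : ∀ Q : 𝒜, Projective Q → Subsingleton (Abelian.Ext A Q 1))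
    (hP' : Projective P')
    (i : K ⟶ P) (p : P ⟶ A) (i' : K' ⟶ P') (p' : P' ⟶ A')
    (hi : Mono i) (hp : Epi p) (w : i ≫ p = 0)
    (hex : (ShortComplex.mk i p w).Exact)
    (w' : i' ≫ p' = 0)
    (f : K ⟶ K') (h : P ⟶ P') (g : A ⟶ A')
    (hcomm₁ : i ≫ h = f ≫ i') (hcomm₂ : p ≫ g = h ≫ p')
    (hf : FactorsThroughProjective f) :
    FactorsThroughProjective g := by
  obtain ⟨Q, hQ, u, v, rfl⟩ := hf
  have := hExt Q hQ
  obtain ⟨u', hu'⟩ :=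
    (ShortComplex.ShortExact.mk' hex hi hp).exists_f_comp_eq_of_subsingleton_ext u
  -- `h` minus a map through `Q` kills `K`, hence descends to `A`; it lifts `g` along `p'`.
  have hψ : i ≫ (h - u' ≫ v ≫ i') = 0 := by
    rw [Preadditive.comp_sub, hcomm₁, ← reassoc_of% hu', assoc, assoc, sub_self]
  refine ⟨P', hP', hex.desc _ hψ, p', ?_⟩
  rw [← cancel_epi p, hcomm₂, hex.g_desc_assoc, Preadditive.sub_comp, assoc, assoc, w',
    comp_zero, comp_zero, sub_zero]

theorem factorsThroughProjective_of_ext_one_vanishing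
    [EnoughProjectives 𝒜] [HasExt.{w} 𝒜]
    {A K P A' K' P' : 𝒜}
    (hExt : ∀ Q : 𝒜, Projective Q → Subsingleton (Abelian.Ext A Q 1))
    (hP : Projective P) (hP' : Projective P')
    (i : K ⟶ P) (p : P ⟶ A) (i' : K' ⟶ P') (p' : P' ⟶ A')
    (hi : Mono i) (hp : Epi p) (w : i ≫ p = 0)
    (hex : (ShortComplex.mk i p w).Exact)
    (hi' : Mono i') (hp' : Epi p') (w' : i' ≫ p' = 0)
    (hex' : (ShortComplex.mk i' p' w').Exact)
    (f : K ⟶ K') (h : P ⟶ P') (g : A ⟶ A')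
    (hcomm₁ : i ≫ h = f ≫ i') (hcomm₂ : p ≫ g = h ≫ p')
    (hf : FactorsThroughProjective f) :
    FactorsThroughProjective g :=
  factorsThroughProjective_of_ext_one_vanishing_general hExt hP' i p i' p' hi hp w hex w' f h g
    hcomm₁ hcomm₂ hf
end

section
/- Let 𝒜 be an abelian category. Suppose 0 → K → P → A → 0 is a short exact sequence with P projective, and suppose there is an isomorphism A ⊕ R ≅ B ⊕ R' where R and R' are projective objects. Then there exists a short exact sequence 0 → K → Q → B → 0 with Q projective. -/
open CategoryTheory Category Limits

universe v u

variable {𝒜 : Type u} [Category.{v} 𝒜] [Abelian 𝒜]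

theorem exists_shortExact_of_biprod_iso
    {K P A B R R' : 𝒜}
    (hP : Projective P) (hR : Projective R) (hR' : Projective R')
    (i : K ⟶ P) (p : P ⟶ A)
    (hi : Mono i) (hp : Epi p) (w : i ≫ p = 0)
    (hex : (ShortComplex.mk i p w).Exact)
    (e : A ⊞ R ≅ B ⊞ R') :
    ∃ (Q : 𝒜) (_ : Projective Q) (j : K ⟶ Q) (q : Q ⟶ B) (w' : j ≫ q = 0),
      Mono j ∧ Epi q ∧ (ShortComplex.mk j q w').Exact := by
  classical
  haveI := hP; haveI := hR; haveI := hR'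
  have hPR : Projective (P ⊞ R) := inferInstance
  set f : P ⊞ R ⟶ A ⊞ R := biprod.map p (𝟙 R) with hf
  have hfepi : Epi f := by
    rw [Preadditive.epi_iff_cancel_zero]
    intro T h hh
    have h1 : biprod.inl ≫ h = 0 := by
      have := biprod.inl ≫= hh
      rw [biprod.inl_map_assoc, comp_zero] at this
      exact zero_of_epi_comp p this
    have h2 : biprod.inr ≫ h = 0 := by
      have := biprod.inr ≫= hh
      rwa [biprod.inr_map_assoc, id_comp, comp_zero] at this
    apply biprod.hom_ext' <;> simpa
  set g : P ⊞ R ⟶ B ⊞ R' := f ≫ e.hom with hg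
  have hgepi : Epi g := epi_comp _ _
  set k : K ⟶ P ⊞ R := i ≫ biprod.inl with hk
  have hkmono : Mono k := mono_comp _ _
  have hkg : k ≫ g = 0 := by
    rw [hk, hg, hf, assoc, biprod.inl_map_assoc, ← assoc, ← assoc, w,
      zero_comp, zero_comp]
  -- k has the lifting property of the kernel of g
  have hiK : IsLimit (KernelFork.ofι i w) := hex.fIsKernel
  have klift : ∀ {T : 𝒜} (t : T ⟶ P ⊞ R), t ≫ g = 0 → ∃ l : T ⟶ K, l ≫ k = t := by
    intro T t ht
    have htf : t ≫ f = 0 := by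
      have h1 : (t ≫ f) ≫ e.hom = 0 := by rw [assoc, ← hg, ht]
      simpa using h1 =≫ e.inv
    have hsnd : t ≫ biprod.snd = 0 := by
      have := htf =≫ biprod.snd
      rwa [assoc, hf, biprod.map_snd, ← assoc, zero_comp, comp_id] at this
    have hfst : (t ≫ biprod.fst) ≫ p = 0 := by
      have := htf =≫ biprod.fst
      rwa [assoc, hf, biprod.map_fst, ← assoc, zero_comp] at this
    obtain ⟨l, hl⟩ := KernelFork.IsLimit.lift' hiK (t ≫ biprod.fst) hfst
    refine ⟨l, ?_⟩
    apply biprod.hom_ext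
    · simp only [hk, assoc, biprod.inl_fst, comp_id]
      exact hl
    · simp only [hk, assoc, biprod.inl_snd, comp_zero]
      exact hsnd.symm
  -- the second component of g
  set g2 : P ⊞ R ⟶ R' := g ≫ biprod.snd with hg2
  have hg2epi : Epi g2 := epi_comp _ _
  -- Q is the kernel of g2
  set Q : 𝒜 := kernel g2 with hQ
  set ι : Q ⟶ P ⊞ R := kernel.ι g2 with hι
  -- a splitting of g2
  obtain ⟨s, hs⟩ := hR'.factors (𝟙 R') g2
  set r : P ⊞ R ⟶ Q := kernel.lift g2 (𝟙 _ - g2 ≫ s) (by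
    simp only [Preadditive.sub_comp, id_comp, assoc, hs, comp_id, sub_self]) with hr
  have hrι : r ≫ ι = 𝟙 _ - g2 ≫ s := kernel.lift_ι _ _ _
  have hιr : ι ≫ r = 𝟙 Q := by
    rw [← cancel_mono ι, assoc, hrι, Preadditive.comp_sub, comp_id,
      ← assoc, hι, kernel.condition, zero_comp, sub_zero, id_comp]
  -- Q is projective as a retract of P ⊞ R
  have hQproj : Projective Q := by
    constructor
    intro E X h π hπ
    obtain ⟨L, hL⟩ := hPR.factors (r ≫ h) π
    exact ⟨ι ≫ L, by rw [assoc, hL, ← assoc, hιr, id_comp]⟩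
  -- the maps j and q
  have hkg2 : k ≫ g2 = 0 := by rw [hg2, ← assoc, hkg, zero_comp]
  set j : K ⟶ Q := kernel.lift g2 k hkg2 with hj
  have hjι : j ≫ ι = k := kernel.lift_ι _ _ _
  set q : Q ⟶ B := ι ≫ g ≫ biprod.fst with hq
  have w' : j ≫ q = 0 := by
    rw [hq, ← assoc, hjι, ← assoc, hkg, zero_comp]
  have hjmono : Mono j := by
    have : Mono (j ≫ ι) := by rw [hjι]; exact hkmono
    exact mono_of_mono j ι
  have hqepi : Epi q := by
    rw [Preadditive.epi_iff_cancel_zero]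
    intro T h hh
    have hcond : kernel.ι g2 ≫ g ≫ biprod.fst ≫ h = 0 := by
      have := hq ▸ hh
      simpa only [assoc] using this
    set u : R' ⟶ T := Abelian.epiDesc g2 (g ≫ biprod.fst ≫ h) hcond with hu
    have hcomp : g2 ≫ u = g ≫ biprod.fst ≫ h := Abelian.comp_epiDesc _ _ _
    have : g ≫ biprod.fst ≫ h = g ≫ biprod.snd ≫ u := by
      rw [← hcomp, hg2, assoc]
    have h2 : biprod.fst ≫ h = biprod.snd ≫ u := by
      rwa [cancel_epi g] at this
    have := biprod.inl ≫= h2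
    rwa [biprod.inl_fst_assoc, biprod.inl_snd_assoc, zero_comp] at this
  -- exactness : j is a kernel of q
  have L : ∀ {T : 𝒜} (t : T ⟶ Q), t ≫ q = 0 → {l : T ⟶ K // l ≫ j = t} := by
    intro T t ht
    have h1 : (t ≫ ι) ≫ g = 0 := by
      apply biprod.hom_ext
      · simpa only [assoc, zero_comp] using hq ▸ ht
      · rw [assoc, ← hg2, hι, assoc, kernel.condition, comp_zero, zero_comp]
    refine ⟨(klift (t ≫ ι) h1).choose, ?_⟩
    have h2 := (klift (t ≫ ι) h1).choose_spec
    rw [← cancel_mono ι, assoc, hjι, h2]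
  have hker : IsLimit (KernelFork.ofι j w') :=
    KernelFork.IsLimit.ofι j w' (fun t ht => (L t ht).1) (fun t ht => (L t ht).2)
      (fun t ht m hm => by rw [← cancel_mono j, hm, (L t ht).2])
  exact ⟨Q, hQproj, j, q, w', hjmono, hqepi,
    ShortComplex.exact_of_f_is_kernel _ hker⟩
end

section
/- Let 𝒜 be an abelian category with enough projectives. Suppose given, for every n ∈ ℤ, objects A_n and K_{n+1} of 𝒜, a short exact sequence 0 → K_{n+1} → P_n → A_{n+1} → 0 with P_n projective, and an isomorphism A_n ⊕ R_n ≅ K_{n+1} ⊕ R'_n with R_n and R'_n projective. Then there exists an acyclic (exact) ℤ-indexed complex ⋯ → Q_{n-1} →^{d_{n-1}} Q_n →^{d_n} Q_{n+1} → ⋯ with every Q_n projective such that ker(d_n) ≅ K_{n+1} for all n ∈ ℤ. -/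
open CategoryTheory Category Limits

universe v u

variable {𝒜 : Type u} [Category.{v} 𝒜] [Abelian 𝒜]

/-- A retract of a projective object is projective. -/
lemma projective_of_retract' {Q X : 𝒜} (s : Q ⟶ X) (r : X ⟶ Q) (h : s ≫ r = 𝟙 Q)
    (hX : Projective X) : Projective Q where
  factors {E Z} f g hg := by
    haveI := hX
    exact ⟨s ≫ Projective.factorThru (r ≫ f) g, by
      rw [assoc, Projective.factorThru_comp, ← assoc, h, id_comp]⟩

/-- The data of one "step" of the acyclic complex: a projective object `Q` sitting in a
short exact sequence `0 ⟶ K ⟶ Q ⟶ K' ⟶ 0` where `κ` is a kernel of `q`. -/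
structure StepData (K K' : 𝒜) where
  Q : 𝒜
  κ : K ⟶ Q
  q : Q ⟶ K'
  proj : Projective Q
  mono : Mono κ
  epi : Epi q
  zero : κ ≫ q = 0
  isKernel : IsLimit (KernelFork.ofι κ zero)

/-- Strip a projective direct summand `R'` off a short exact sequence
`0 ⟶ K ⟶ X ⟶ K' ⊞ R' ⟶ 0` with `X` projective. -/
noncomputable def stepOfSES {K X K' R' : 𝒜} (hX : Projective X) (hR' : Projective R')
    (ι : K ⟶ X) (π : X ⟶ K' ⊞ R') [Epi π] (w0 : ι ≫ π = 0)
    (hker : IsLimit (KernelFork.ofι ι w0)) : StepData K K' := by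
  haveI := hX; haveI := hR'
  haveI hmι : Mono ι := mono_of_isLimit_fork hker
  haveI : Epi (π ≫ biprod.snd) := epi_comp _ _
  have hκw : ι ≫ π ≫ biprod.snd = 0 := by rw [← assoc, w0, zero_comp]
  refine
    { Q := kernel (π ≫ biprod.snd)
      κ := kernel.lift (π ≫ biprod.snd) ι hκw
      q := kernel.ι (π ≫ biprod.snd) ≫ π ≫ biprod.fst
      proj := ?_
      mono := ?_
      epi := ?_
      zero := ?_
      isKernel := ?_ }
  · -- projectivity, via the splitting coming from projectivity of R'
    have hσ : Projective.factorThru (𝟙 R') (π ≫ biprod.snd) ≫ π ≫ biprod.snd = 𝟙 R' :=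
      Projective.factorThru_comp _ _
    have hr : (𝟙 X - (π ≫ biprod.snd) ≫ Projective.factorThru (𝟙 R') (π ≫ biprod.snd)) ≫
        (π ≫ biprod.snd) = 0 := by
      rw [Preadditive.sub_comp, id_comp, assoc, hσ, comp_id, sub_self]
    refine projective_of_retract' (kernel.ι (π ≫ biprod.snd))
      (kernel.lift (π ≫ biprod.snd) _ hr) ?_ hX
    have h1 : kernel.lift (π ≫ biprod.snd) _ hr ≫ kernel.ι (π ≫ biprod.snd)
        = 𝟙 X - (π ≫ biprod.snd) ≫ Projective.factorThru (𝟙 R') (π ≫ biprod.snd) :=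
      kernel.lift_ι _ _ _
    rw [← cancel_mono (kernel.ι (π ≫ biprod.snd)), assoc, h1, id_comp,
      Preadditive.comp_sub, comp_id, ← assoc, kernel.condition, zero_comp, sub_zero]
  · -- mono
    haveI : Mono (kernel.lift (π ≫ biprod.snd) ι hκw ≫ kernel.ι (π ≫ biprod.snd)) := by
      rw [kernel.lift_ι]; exact hmι
    exact mono_of_mono _ (kernel.ι (π ≫ biprod.snd))
  · -- epi
    apply Preadditive.epi_of_cancel_zero
    intro T h hh
    have hu : kernel.ι (π ≫ biprod.snd) ≫ π ≫ biprod.fst ≫ h = 0 := by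
      simpa only [assoc] using hh
    have hc : (π ≫ biprod.snd) ≫ Abelian.epiDesc (π ≫ biprod.snd) (π ≫ biprod.fst ≫ h) hu
        = π ≫ biprod.fst ≫ h := Abelian.comp_epiDesc _ _ _
    rw [assoc] at hc
    have h4 := (cancel_epi π).1 hc
    have h5 := biprod.inl ≫= h4
    simpa using h5.symm
  · -- zero
    rw [← assoc, kernel.lift_ι, ← assoc, w0, zero_comp]
  · -- the kernel property
    have key : ∀ {W : 𝒜} (t : W ⟶ kernel (π ≫ biprod.snd)),
        t ≫ kernel.ι (π ≫ biprod.snd) ≫ π ≫ biprod.fst = 0 →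
        { l : W ⟶ K // l ≫ kernel.lift (π ≫ biprod.snd) ι hκw = t } := by
      intro W t ht
      have hsnd0 : t ≫ kernel.ι (π ≫ biprod.snd) ≫ π ≫ biprod.snd = 0 := by
        rw [kernel.condition, comp_zero]
      have hπ0 : (t ≫ kernel.ι (π ≫ biprod.snd)) ≫ π = 0 := by
        apply biprod.hom_ext
        · simpa only [assoc, zero_comp] using ht
        · simpa only [assoc, zero_comp] using hsnd0
      obtain ⟨l, hl⟩ := KernelFork.IsLimit.lift' hker (t ≫ kernel.ι (π ≫ biprod.snd)) hπ0
      simp only [Fork.ι_ofι] at hl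
      refine ⟨l, ?_⟩
      rw [← cancel_mono (kernel.ι (π ≫ biprod.snd)), assoc, kernel.lift_ι, hl]
    exact KernelFork.IsLimit.ofι' _ _ key

/-- `i ≫ biprod.inl` is a kernel of `biprod.map p (𝟙 R) ≫ e.hom`. -/
noncomputable def isKernelInlCompMap {K P A B : 𝒜} (i : K ⟶ P) (p : P ⟶ A)
    (w : i ≫ p = 0) (hker : IsLimit (KernelFork.ofι i w)) (R : 𝒜) (e : A ⊞ R ≅ B)
    (w' : (i ≫ biprod.inl) ≫ biprod.map p (𝟙 R) ≫ e.hom = 0) :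
    IsLimit (KernelFork.ofι (i ≫ biprod.inl) w') := by
  haveI : Mono i := mono_of_isLimit_fork hker
  haveI : Mono (i ≫ (biprod.inl : P ⟶ P ⊞ R)) := mono_comp _ _
  refine KernelFork.IsLimit.ofι' _ _ (fun {W} k hk => ?_)
  have hmap : k ≫ biprod.map p (𝟙 R) = 0 := by
    have h3 := hk =≫ e.inv
    rw [zero_comp, assoc, assoc, e.hom_inv_id, comp_id] at h3
    exact h3
  have hfst : (k ≫ biprod.fst) ≫ p = 0 := by
    have := hmap =≫ biprod.fst
    rw [zero_comp, assoc, biprod.map_fst, ← assoc] at this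
    exact this
  have hsnd : k ≫ biprod.snd = 0 := by
    have := hmap =≫ biprod.snd
    rwa [zero_comp, assoc, biprod.map_snd, comp_id] at this
  obtain ⟨l, hl⟩ := KernelFork.IsLimit.lift' hker (k ≫ biprod.fst) hfst
  simp only [Fork.ι_ofι] at hl
  refine ⟨l, ?_⟩
  apply biprod.hom_ext
  · simp [hl]
  · simp [hsnd]

theorem exists_acyclic_complex_of_projectives
    [EnoughProjectives 𝒜]
    (A K P R R' : ℤ → 𝒜)
    (hP : ∀ n, Projective (P n)) (hR : ∀ n, Projective (R n))
    (hR' : ∀ n, Projective (R' n))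
    (i : ∀ n : ℤ, K (n + 1) ⟶ P n) (p : ∀ n : ℤ, P n ⟶ A (n + 1))
    (hi : ∀ n, Mono (i n)) (hp : ∀ n, Epi (p n))
    (w : ∀ n, i n ≫ p n = 0)
    (hex : ∀ n, (ShortComplex.mk (i n) (p n) (w n)).Exact)
    (e : ∀ n : ℤ, Nonempty (A n ⊞ R n ≅ K (n + 1) ⊞ R' n)) :
    ∃ (Q : ℤ → 𝒜) (d : ∀ n : ℤ, Q n ⟶ Q (n + 1)),
      (∀ n, Projective (Q n)) ∧
      (∀ n, ∃ wd : d n ≫ d (n + 1) = 0, (ShortComplex.mk (d n) (d (n + 1)) wd).Exact) ∧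
      (∀ n : ℤ, Nonempty (kernel (d n) ≅ K (n + 1))) := by
  classical
  have hker : ∀ n, IsLimit (KernelFork.ofι (i n) (w n)) := fun n =>
    haveI := hi n
    (hex n).fIsKernel
  have hw' : ∀ n : ℤ, (i n ≫ biprod.inl) ≫ biprod.map (p n) (𝟙 (R (n + 1)))
      ≫ (e (n + 1)).some.hom = 0 := by
    intro n
    rw [assoc, biprod.inl_map_assoc, ← assoc, ← assoc, w n, zero_comp, zero_comp]
  haveI : ∀ n : ℤ, Epi (biprod.map (p n) (𝟙 (R (n + 1))) ≫ (e (n + 1)).some.hom) := by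
    intro n
    haveI := hp n
    exact epi_comp _ _
  have S : ∀ n : ℤ, StepData (K (n + 1)) (K (n + 1 + 1)) := fun n =>
    haveI := hP n
    haveI := hR (n + 1)
    haveI := hp n
    stepOfSES (inferInstance : Projective (P n ⊞ R (n + 1))) (hR' (n + 1))
      (i n ≫ biprod.inl) (biprod.map (p n) (𝟙 (R (n + 1))) ≫ (e (n + 1)).some.hom)
      (hw' n)
      (isKernelInlCompMap (i n) (p n) (w n) (hker n) (R (n + 1)) (e (n + 1)).some (hw' n))
  refine ⟨fun n => (S n).Q, fun n => (S n).q ≫ (S (n + 1)).κ, fun n => (S n).proj, ?_, ?_⟩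
  · intro n
    have wd : ((S n).q ≫ (S (n + 1)).κ) ≫ (S (n + 1)).q ≫ (S (n + 1 + 1)).κ = 0 := by
      rw [assoc, reassoc_of% (S (n + 1)).zero, zero_comp, comp_zero]
    refine ⟨wd, ?_⟩
    rw [ShortComplex.exact_iff_kernel_ι_comp_cokernel_π_zero]
    have h1 : kernel.ι ((S (n + 1)).q ≫ (S (n + 1 + 1)).κ) ≫ (S (n + 1)).q = 0 := by
      haveI := (S (n + 1 + 1)).mono
      rw [← cancel_mono ((S (n + 1 + 1)).κ), assoc, zero_comp]
      exact kernel.condition _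
    obtain ⟨v, hv⟩ := KernelFork.IsLimit.lift' (S (n + 1)).isKernel
      (kernel.ι ((S (n + 1)).q ≫ (S (n + 1 + 1)).κ)) h1
    simp only [Fork.ι_ofι] at hv
    have h2 : (S (n + 1)).κ ≫ cokernel.π ((S n).q ≫ (S (n + 1)).κ) = 0 := by
      haveI := (S n).epi
      rw [← cancel_epi ((S n).q), comp_zero, ← assoc]
      exact cokernel.condition _
    rw [← hv, assoc, h2, comp_zero]
  · intro n
    refine ⟨?_⟩
    haveI := (S (n + 1)).mono
    exact (kernelCompMono ((S n).q) ((S (n + 1)).κ)).trans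
      (IsLimit.conePointUniqueUpToIso (limit.isLimit _) (S n).isKernel)
end

section
/- Let 𝒜 be an abelian category with enough projectives. Let (Q_•, d_•) and (Q'_•, d'_•) be acyclic ℤ-indexed complexes of projective objects, with A_n := ker(d_n) and A'_n := ker(d'_n), giving short exact sequences 0 → A_n →^{i_n} Q_n →^{p_n} A_{n+1} → 0 with d_n = i_{n+1} ∘ p_n, and similarly for the primed data. Suppose given morphisms f_n : A_n → A'_n for all n ∈ ℤ such that for every n there exist g_n : Q_n → Q'_n and k_n : A_n → A'_n with p'_n ∘ g_n = f_{n+1} ∘ p_n, i'_n ∘ k_n = g_n ∘ i_n, and f_n − k_n factoring through a projective object. Then there exists a chain map l_• : (Q_•, d_•) → (Q'_•, d'_•) such that for every n ∈ ℤ the morphism A_n → A'_n induced by l_• on kernels differs from f_n by a morphism factoring through a projective object. -/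
open CategoryTheory Category Limits

universe v u

variable {𝒜 : Type u} [Category.{v} 𝒜] [Abelian 𝒜]

theorem exists_chain_map_realizing_stable_morphisms
    [EnoughProjectives 𝒜]
    (Q Q' A A' : ℤ → 𝒜)
    (hQ : ∀ n, Projective (Q n)) (hQ' : ∀ n, Projective (Q' n))
    (i : ∀ n : ℤ, A n ⟶ Q n) (p : ∀ n : ℤ, Q n ⟶ A (n + 1))
    (i' : ∀ n : ℤ, A' n ⟶ Q' n) (p' : ∀ n : ℤ, Q' n ⟶ A' (n + 1))
    (hi : ∀ n, Mono (i n)) (hp : ∀ n, Epi (p n))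
    (w : ∀ n, i n ≫ p n = 0)
    (hex : ∀ n, (ShortComplex.mk (i n) (p n) (w n)).Exact)
    (hi' : ∀ n, Mono (i' n)) (hp' : ∀ n, Epi (p' n))
    (w' : ∀ n, i' n ≫ p' n = 0)
    (hex' : ∀ n, (ShortComplex.mk (i' n) (p' n) (w' n)).Exact)
    (f : ∀ n : ℤ, A n ⟶ A' n)
    (hf : ∀ n : ℤ, ∃ (g : Q n ⟶ Q' n) (k : A n ⟶ A' n),
      g ≫ p' n = p n ≫ f (n + 1) ∧ k ≫ i' n = i n ≫ g ∧
      FactorsThroughProjective (f n - k)) :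
    ∃ l : ∀ n : ℤ, Q n ⟶ Q' n,
      (∀ n : ℤ, l n ≫ (p' n ≫ i' (n + 1)) = (p n ≫ i (n + 1)) ≫ l (n + 1)) ∧
      (∀ n : ℤ, ∃ z : A n ⟶ A' n, z ≫ i' n = i n ≫ l n ∧
        FactorsThroughProjective (f n - z)) := by
  choose g k hg hk hfk using hf
  choose P hP u v huv using hfk
  haveI : ∀ n, Projective (P n) := hP
  haveI : ∀ n, Epi (p' n) := hp'
  set t : ∀ n : ℤ, P (n + 1) ⟶ Q' n :=
    fun n => Projective.factorThru (v (n + 1)) (p' n) with ht_def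
  have ht : ∀ n : ℤ, t n ≫ p' n = v (n + 1) := fun n =>
    Projective.factorThru_comp _ _
  refine ⟨fun n => g n - (p n ≫ u (n + 1)) ≫ t n, ?_, ?_⟩
  · intro n
    have e1 : (g n - (p n ≫ u (n + 1)) ≫ t n) ≫ (p' n ≫ i' (n + 1)) =
        p n ≫ k (n + 1) ≫ i' (n + 1) := by
      have huv' : u (n + 1) ≫ v (n + 1) = f (n + 1) - k (n + 1) := (huv (n + 1)).symm
      rw [Preadditive.sub_comp, ← assoc (g n), hg n]
      simp only [assoc]
      rw [reassoc_of% (ht n), reassoc_of% huv']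
      simp only [Preadditive.sub_comp, Preadditive.comp_sub]
      abel
    have e2 : (p n ≫ i (n + 1)) ≫ (g (n + 1) - (p (n + 1) ≫ u (n + 1 + 1)) ≫ t (n + 1)) =
        p n ≫ k (n + 1) ≫ i' (n + 1) := by
      have hz : (p n ≫ i (n + 1)) ≫ (p (n + 1) ≫ u (n + 1 + 1)) ≫ t (n + 1) = 0 := by
        simp only [assoc]
        rw [reassoc_of% (w (n + 1))]
        simp
      rw [Preadditive.comp_sub, hz, sub_zero, assoc, ← hk (n + 1)]
    rw [e1, e2]
  · intro n
    refine ⟨k n, ?_, P n, hP n, u n, v n, huv n⟩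
    have hz : i n ≫ (p n ≫ u (n + 1)) ≫ t n = 0 := by
      simp only [assoc]
      rw [reassoc_of% (w n)]
      simp
    rw [Preadditive.comp_sub, hz, sub_zero, hk n]
end
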